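/- arXiv:2102.00050 — 3 statements merged into one kernel-verified Lean document; each statement's English description precedes it below -/
import Mathlib

section
/- For any compact set Θ ⊂ R^d with Leb(Θ) > 0, the normalization constant Z_{v,τ} = (2πv/n)^{-d/2} ∫_{R^d} e^{-(n/(2v)) d(z, Θ_τ)^2} dz satisfies ln Z_{v,τ} = (d/2) ln(n/(2πv)) + ln Leb(Θ_τ) + o(1) as n → ∞ (for fixed v > 0 and τ > 0). -/
/-! Let `K = Θ_τ`, a compact set containing `Θ`, so `0 < Leb K < ∞`. As `t → ∞`,
`exp (-t · d(z, K)²)` decreases to the indicator of `K`, and for `t ≥ 1` it is dominated by the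
integrable `exp (-d(z, K)²)` (a Gaussian tail, since `K` is bounded). Dominated convergence gives
`∫ exp (-t · d(z, K)²) dz → Leb K`. With `t = n / (2v)` the logarithm of the prefactor is exactly
`(d/2) ln (n / (2πv))`, so the error term is `ln ∫ … - ln Leb K → 0`. -/

open MeasureTheory Filter Real Metric Set

theorem exists_norm_le_infDist_add {E : Type*} [SeminormedAddCommGroup E] {K : Set E}
    (hK : Bornology.IsBounded K) (hne : K.Nonempty) :
    ∃ R, ∀ z, ‖z‖ ≤ infDist z K + R := by
  obtain ⟨y, hy⟩ := hne
  refine ⟨diam K + ‖y‖, fun z => ?_⟩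
  have hzy : dist z y ≤ infDist z K + diam K := dist_le_infDist_add_diam hK hy
  have := norm_le_norm_sub_add z y
  rw [dist_eq_norm] at hzy
  linarith

theorem tendsto_exp_neg_mul_infDist_sq_indicator {α : Type*} [PseudoMetricSpace α] {K : Set α}
    (hK : IsClosed K) (hne : K.Nonempty) (z : α) :
    Tendsto (fun t : ℝ => rexp (-t * infDist z K ^ 2)) atTop (nhds (K.indicator 1 z)) := by
  by_cases hz : z ∈ K
  · simp [infDist_zero_of_mem hz, hz]
  · have hpos : 0 < infDist z K ^ 2 := pow_pos ((hK.notMem_iff_infDist_pos hne).1 hz) 2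
    rw [indicator_of_notMem hz]
    exact tendsto_exp_atBot.comp (tendsto_neg_atTop_atBot.atBot_mul_const hpos)

section InnerProductSpace

variable {V : Type*} [NormedAddCommGroup V] [InnerProductSpace ℝ V] [FiniteDimensional ℝ V]
  [MeasurableSpace V] [BorelSpace V]

theorem integrable_exp_neg_mul_sq_norm {b : ℝ} (hb : 0 < b) :
    Integrable (fun v : V => rexp (-b * ‖v‖ ^ 2)) := by
  have h := GaussianFourier.integrable_cexp_neg_mul_sq_norm_add
    (V := V) (b := (b : ℂ)) (by simpa using hb) 0 0
  refine h.norm.congr (Eventually.of_forall fun v => ?_)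
  simp [Complex.norm_exp, ← Complex.ofReal_pow]

theorem integrable_exp_neg_mul_infDist_sq {K : Set V} (hK : Bornology.IsBounded K)
    (hne : K.Nonempty) {c : ℝ} (hc : 0 < c) :
    Integrable (fun z : V => rexp (-c * infDist z K ^ 2)) := by
  obtain ⟨R, hR⟩ := exists_norm_le_infDist_add hK hne
  have hbound : ∀ z : V,
      rexp (-c * infDist z K ^ 2) ≤ rexp (c * R ^ 2) * rexp (-(c / 2) * ‖z‖ ^ 2) := by
    intro z
    have hsq : ‖z‖ ^ 2 ≤ 2 * infDist z K ^ 2 + 2 * R ^ 2 := by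
      nlinarith [hR z, norm_nonneg z, sq_nonneg (infDist z K - R)]
    rw [← exp_add]
    exact exp_le_exp.2 (by nlinarith)
  refine ((integrable_exp_neg_mul_sq_norm (half_pos hc)).const_mul (rexp (c * R ^ 2))).mono'
    (by fun_prop : Continuous _).aestronglyMeasurable (Eventually.of_forall fun z => ?_)
  rw [norm_of_nonneg (exp_pos _).le]
  exact hbound z

theorem tendsto_integral_exp_neg_mul_infDist_sq {K : Set V} (hK : IsCompact K)
    (hne : K.Nonempty) :
    Tendsto (fun t : ℝ => ∫ z, rexp (-t * infDist z K ^ 2)) atTop (nhds (volume.real K)) := by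
  rw [← integral_indicator_one hK.measurableSet]
  refine tendsto_integral_filter_of_dominated_convergence (fun z => rexp (-1 * infDist z K ^ 2))
    (Eventually.of_forall fun t => (by fun_prop : Continuous _).aestronglyMeasurable) ?_
    (integrable_exp_neg_mul_infDist_sq hK.isBounded hne one_pos)
    (Eventually.of_forall (tendsto_exp_neg_mul_infDist_sq_indicator hK.isClosed hne))
  filter_upwards [eventually_ge_atTop 1] with t ht
  refine Eventually.of_forall fun z => ?_
  rw [norm_of_nonneg (exp_pos _).le]
  exact exp_le_exp.2 (by nlinarith [sq_nonneg (infDist z K)])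

end InnerProductSpace

theorem log_shtarkov_normalization_general (d : ℕ) (Θ : Set (EuclideanSpace ℝ (Fin d)))
    (hΘ : IsCompact Θ) (h0 : 0 < volume Θ) (v τ : ℝ) (hv : 0 < v) :
    Tendsto (fun n : ℕ =>
        Real.log ((2 * π * v / (n : ℝ)) ^ (-(d : ℝ) / 2) *
          ∫ z : EuclideanSpace ℝ (Fin d),
            Real.exp (-((n : ℝ) / (2 * v)) * (Metric.infDist z (Metric.cthickening τ Θ)) ^ 2))
        - ((d : ℝ) / 2 * Real.log ((n : ℝ) / (2 * π * v))
            + Real.log (volume (Metric.cthickening τ Θ)).toReal))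
      atTop (nhds 0) := by
  set K := cthickening τ Θ
  have hK : IsCompact K := hΘ.cthickening
  have hΘK : Θ ⊆ K := self_subset_cthickening Θ
  have hvolK : 0 < (volume K).toReal :=
    ENNReal.toReal_pos (h0.trans_le (measure_mono hΘK)).ne' hK.measure_lt_top.ne
  have hne : K.Nonempty := (nonempty_of_measure_ne_zero h0.ne').mono hΘK
  have hI : Tendsto (fun n : ℕ => ∫ z, rexp (-((n : ℝ) / (2 * v)) * infDist z K ^ 2)) atTop
      (nhds (volume K).toReal) :=
    (tendsto_integral_exp_neg_mul_infDist_sq hK hne).comp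
      (tendsto_natCast_atTop_atTop.atTop_div_const (by positivity))
  have hlog := (hI.log hvolK.ne').sub_const (log (volume K).toReal)
  rw [sub_self] at hlog
  refine hlog.congr' ?_
  filter_upwards [eventually_gt_atTop 0, hI.eventually (lt_mem_nhds hvolK)] with n hn hIpos
  have hn' : (0 : ℝ) < n := Nat.cast_pos.2 hn
  have h2πv : 0 < 2 * π * v := by positivity
  rw [log_mul (by positivity) hIpos.ne', log_rpow (by positivity),
    log_div h2πv.ne' hn'.ne', log_div hn'.ne' h2πv.ne']
  ring

/-- for a compact `Θ ⊆ ℝ^d` with `Leb(Θ) > 0` and fixed `v, τ > 0`,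
the normalization constant
`Z_{v,τ} = (2πv/n)^{-d/2} ∫ e^{-(n/(2v)) d(z,Θ_τ)²} dz` satisfies
`ln Z_{v,τ} = (d/2) ln(n/(2πv)) + ln Leb(Θ_τ) + o(1)` as `n → ∞`. -/
theorem log_shtarkov_normalization (d : ℕ) (Θ : Set (EuclideanSpace ℝ (Fin d)))
    (hΘ : IsCompact Θ) (h0 : 0 < volume Θ) (v τ : ℝ) (hv : 0 < v) (hτ : 0 < τ) :
    Tendsto (fun n : ℕ =>
        Real.log ((2 * π * v / (n : ℝ)) ^ (-(d : ℝ) / 2) *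
          ∫ z : EuclideanSpace ℝ (Fin d),
            Real.exp (-((n : ℝ) / (2 * v)) * (Metric.infDist z (Metric.cthickening τ Θ)) ^ 2))
        - ((d : ℝ) / 2 * Real.log ((n : ℝ) / (2 * π * v))
            + Real.log (volume (Metric.cthickening τ Θ)).toReal))
      atTop (nhds 0) :=
  log_shtarkov_normalization_general d Θ hΘ h0 v τ hv
end

section
/- The function λ ↦ h(λ)/(1-λ), where h(λ) = -λ log λ - (1-λ) log(1-λ) is the binary entropy function, is (monotonically) increasing on [0, 1). -/
/-!
The derivative of `h(p) / (1 - p)` collapses to `-log p / (1 - p) ^ 2`, which is positive on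
`(0, 1)`; continuity at `0` extends strict monotonicity to `[0, 1)`.
-/

open Real Set

lemma hasDerivAt_binEntropy_div_one_sub {p : ℝ} (hp₀ : p ≠ 0) (hp₁ : p ≠ 1) :
    HasDerivAt (fun q => binEntropy q / (1 - q)) (-log p / (1 - p) ^ 2) p := by
  refine ((hasDerivAt_binEntropy hp₀ hp₁).div ((hasDerivAt_id' p).const_sub 1)
    (sub_ne_zero.mpr hp₁.symm)).congr_deriv ?_
  rw [binEntropy, log_inv, log_inv]
  ring

theorem strictMonoOn_binEntropy_div_one_sub :
    StrictMonoOn (fun p => binEntropy p / (1 - p)) (Ico 0 1) := by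
  refine strictMonoOn_of_deriv_pos (convex_Ico 0 1) ?_ fun p hp => ?_
  · exact binEntropy_continuous.continuousOn.div (continuousOn_const.sub continuousOn_id)
      fun p hp => sub_ne_zero.mpr hp.2.ne'
  · rw [interior_Ico] at hp
    rw [(hasDerivAt_binEntropy_div_one_sub hp.1.ne' hp.2.ne).deriv]
    exact div_pos (neg_pos.mpr (log_neg hp.1 hp.2)) (pow_pos (sub_pos.mpr hp.2) 2)

/-- `λ ↦ h(λ)/(1-λ)` is increasing on `[0,1)`, where
`h(λ) = -λ log λ - (1-λ) log (1-λ)` is the binary entropy function. -/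
theorem binaryEntropy_div_one_sub_monotone :
    MonotoneOn (fun l : ℝ =>
      (-(l * Real.log l) - (1 - l) * Real.log (1 - l)) / (1 - l)) (Set.Ico 0 1) := by
  have h_eq : (fun l : ℝ => (-(l * log l) - (1 - l) * log (1 - l)) / (1 - l)) =
      fun p => binEntropy p / (1 - p) := by
    funext l
    simp only [binEntropy, log_inv]
    ring
  rw [h_eq]
  exact strictMonoOn_binEntropy_div_one_sub.monotoneOn
end

section
/- Let Ψ(t) = E[e^{itX}] be the characteristic function of a real random variable X with E[X] well-defined, and suppose that for some n ≥ 1 the function t ↦ Ψ(t/n)^n is twice continuously differentiable on R. Then E[X^2] < ∞. -/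
/-!
Let `X'` be an independent copy of `X`. Then
`E[1 - cos (t (X - X'))] = 1 - ‖Ψ t‖² ≤ 1 - ‖Ψ t‖^(2n) = 1 - ‖Ψ (nt / n) ^ n‖²`, and the last
expression is `O(t²)` because the `C²` function `s ↦ ‖Ψ (s / n) ^ n‖²` attains its maximum `1`
at `0`. As `(1 - cos (t x)) / t² → x² / 2`, Fatou's lemma gives `E[(X - X')²] < ∞`, and fixing a
value of `X'` yields `E[X²] < ∞`.
-/

open MeasureTheory Filter Topology Asymptotics Real
open scoped ComplexConjugate

lemma ContDiff.isBigO_sub_sq_of_deriv_eq_zero {E : Type*} [NormedAddCommGroup E] [NormedSpace ℝ E]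
    {f : ℝ → E} (hf : ContDiff ℝ 2 f) {x₀ : ℝ} (hf' : deriv f x₀ = 0) :
    (fun x => f x - f x₀) =O[𝓝 x₀] fun x => (x - x₀) ^ 2 := by
  have htaylor : ∀ x, taylorWithinEval f 2 Set.univ x₀ x
      = f x₀ + ((x - x₀) ^ 2 / 2) • iteratedDeriv 2 f x₀ := by
    intro x
    norm_num [taylor_within_apply, Finset.sum_range_succ, iteratedDerivWithin_univ, hf',
      div_eq_inv_mul]
  have hquad : (fun x => ((x - x₀) ^ 2 / 2) • iteratedDeriv 2 f x₀) =O[𝓝 x₀]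
      fun x => (x - x₀) ^ 2 :=
    ((isBigO_refl (fun x : ℝ => (x - x₀) ^ 2) (𝓝 x₀)).const_mul_left (1 / 2 : ℝ)).smul
        (isBigO_const_const (iteratedDeriv 2 f x₀) one_ne_zero _)
      |>.congr (fun x => by simp [div_eq_inv_mul]) fun x => by simp
  refine ((taylor_isLittleO_univ hf).isBigO.add hquad).congr_left fun x => ?_
  rw [htaylor]
  abel

lemma tendsto_one_sub_cos_mul_div_sq (x : ℝ) :
    Tendsto (fun t => (1 - cos (t * x)) / t ^ 2) (𝓝[≠] 0) (𝓝 (x ^ 2 / 2)) := by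
  have hsmall : ∀ᶠ t in 𝓝[≠] (0 : ℝ), |t * x| < 1 :=
    nhdsWithin_le_nhds <| ContinuousAt.eventually_lt (by fun_prop) continuousAt_const (by simp)
  have hbound : Tendsto (fun t : ℝ => t ^ 2 * (x ^ 4 * (5 / 96))) (𝓝[≠] 0) (𝓝 0) :=
    tendsto_nhdsWithin_of_tendsto_nhds <| by
      simpa using ((continuous_pow 2).tendsto (0 : ℝ)).mul_const (x ^ 4 * (5 / 96))
  rw [tendsto_iff_norm_sub_tendsto_zero]
  refine squeeze_zero' (Eventually.of_forall fun _ => norm_nonneg _) ?_ hbound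
  filter_upwards [hsmall, self_mem_nhdsWithin] with t htx (ht : t ≠ 0)
  have ht2 : 0 < t ^ 2 := by positivity
  calc ‖(1 - cos (t * x)) / t ^ 2 - x ^ 2 / 2‖
      = |cos (t * x) - (1 - (t * x) ^ 2 / 2)| / t ^ 2 := by
        rw [Real.norm_eq_abs, ← abs_neg, ← abs_of_pos ht2, ← abs_div, abs_of_pos ht2]
        congr 1
        field_simp
        ring
    _ ≤ |t * x| ^ 4 * (5 / 96) / t ^ 2 := by gcongr; exact cos_bound htx.le
    _ = t ^ 2 * (x ^ 4 * (5 / 96)) := by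
        rw [pow_abs, abs_of_nonneg (by positivity)]
        field_simp

lemma integrable_sq_of_integral_one_sub_cos_le {α : Type*} [MeasurableSpace α] {ν : Measure α}
    [IsFiniteMeasure ν] {f : α → ℝ} (hf : Measurable f) {C : ℝ}
    (h : ∀ᶠ t in 𝓝[≠] 0, ∫ a, (1 - cos (t * f a)) ∂ν ≤ C * t ^ 2) :
    Integrable (fun a => f a ^ 2) ν := by
  have hfatou : ∫⁻ a, ENNReal.ofReal (f a ^ 2 / 2) ∂ν ≤ ENNReal.ofReal C := calc
    ∫⁻ a, ENNReal.ofReal (f a ^ 2 / 2) ∂ν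
        = ∫⁻ a, liminf (fun t => ENNReal.ofReal ((1 - cos (t * f a)) / t ^ 2)) (𝓝[≠] 0) ∂ν :=
      lintegral_congr fun a => (((ENNReal.continuous_ofReal.tendsto _).comp
        (tendsto_one_sub_cos_mul_div_sq (f a))).liminf_eq).symm
    _ ≤ liminf (fun t => ∫⁻ a, ENNReal.ofReal ((1 - cos (t * f a)) / t ^ 2) ∂ν) (𝓝[≠] 0) :=
      lintegral_liminf_le fun t => by fun_prop
    _ ≤ ENNReal.ofReal C := by
      refine liminf_le_of_frequently_le (Eventually.frequently ?_)
      filter_upwards [h, self_mem_nhdsWithin] with t ht (ht0 : t ≠ 0)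
      have hnonneg : ∀ a, 0 ≤ (1 - cos (t * f a)) / t ^ 2 := fun a =>
        div_nonneg (sub_nonneg.2 (cos_le_one _)) (sq_nonneg t)
      rw [← ofReal_integral_eq_lintegral_ofReal _ (ae_of_all _ hnonneg), integral_div]
      · exact ENNReal.ofReal_le_ofReal ((div_le_iff₀ (by positivity)).2 ht)
      · exact .of_bound (by fun_prop) (2 / t ^ 2) (ae_of_all _ fun a => by
          rw [Real.norm_of_nonneg (hnonneg a)]
          gcongr
          linarith [neg_one_le_cos (t * f a)])
  have hhalf : Integrable (fun a => f a ^ 2 / 2) ν :=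
    ⟨by fun_prop, (hasFiniteIntegral_iff_ofReal (ae_of_all _ fun a => by positivity)).2
      (hfatou.trans_lt ENNReal.ofReal_lt_top)⟩
  exact (hhalf.const_mul 2).congr (ae_of_all _ fun a => by ring)

lemma integrable_sq_of_integrable_sq_sub_prod {α : Type*} [MeasurableSpace α] {μ : Measure α}
    [IsFiniteMeasure μ] [NeZero μ] {f : α → ℝ} (hf : AEStronglyMeasurable f μ)
    (h : Integrable (fun p : α × α => (f p.1 - f p.2) ^ 2) (μ.prod μ)) :
    Integrable (fun a => f a ^ 2) μ := by
  obtain ⟨x, hx⟩ := h.prod_right_ae.exists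
  have hsub : MemLp (fun y => f x - f y) 2 μ :=
    (memLp_two_iff_integrable_sq (aestronglyMeasurable_const.sub hf)).2 hx
  exact (memLp_two_iff_integrable_sq hf).1 <| by
    simpa [Pi.sub_def] using (memLp_const (f x)).sub hsub

section charFun

variable {μ : Measure ℝ} [IsProbabilityMeasure μ]

lemma integral_one_sub_cos_mul_sub_eq_one_sub_norm_charFun_sq (t : ℝ) :
    ∫ p : ℝ × ℝ, (1 - cos (t * (p.1 - p.2))) ∂(μ.prod μ) = 1 - ‖charFun μ t‖ ^ 2 := by
  have hprod : ∀ p : ℝ × ℝ,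
      Complex.exp (t * p.1 * Complex.I) * conj (Complex.exp (t * p.2 * Complex.I))
        = Complex.exp ((t * (p.1 - p.2) : ℝ) * Complex.I) := fun p => by
    rw [← Complex.exp_conj, ← Complex.exp_add]
    simp only [map_mul, Complex.conj_ofReal, Complex.conj_I]
    push_cast
    ring_nf
  have hexp : Integrable (fun p : ℝ × ℝ => Complex.exp ((t * (p.1 - p.2) : ℝ) * Complex.I))
      (μ.prod μ) :=
    .of_bound (by fun_prop) 1 (ae_of_all _ fun p => (Complex.norm_exp_ofReal_mul_I _).le)
  have hcos : Integrable (fun p : ℝ × ℝ => cos (t * (p.1 - p.2))) (μ.prod μ) :=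
    .of_bound (by fun_prop) 1 (ae_of_all _ fun p => abs_cos_le_one _)
  calc ∫ p : ℝ × ℝ, (1 - cos (t * (p.1 - p.2))) ∂(μ.prod μ)
      = 1 - ∫ p : ℝ × ℝ, cos (t * (p.1 - p.2)) ∂(μ.prod μ) := by
        rw [integral_sub (integrable_const 1) hcos]
        simp
    _ = 1 - (∫ p : ℝ × ℝ, Complex.exp ((t * (p.1 - p.2) : ℝ) * Complex.I) ∂(μ.prod μ)).re := by
        rw [← RCLike.re_to_complex, ← integral_re hexp]
        congr 2 with p
        exact (Complex.exp_ofReal_mul_I_re _).symm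
    _ = 1 - (charFun μ t * conj (charFun μ t)).re := by
        rw [charFun_apply_real, ← integral_conj, ← integral_prod_mul]
        simp_rw [hprod]
    _ = 1 - ‖charFun μ t‖ ^ 2 := by
        rw [Complex.mul_conj, Complex.normSq_eq_norm_sq]
        norm_cast

lemma exists_one_sub_norm_charFun_sq_le {n : ℕ} (hn : n ≠ 0)
    (h : ContDiff ℝ 2 fun t => charFun μ (t / n) ^ n) :
    ∃ C, ∀ᶠ t in 𝓝 0, 1 - ‖charFun μ t‖ ^ 2 ≤ C * t ^ 2 := by
  set q : ℝ → ℝ := fun t => ‖charFun μ (t / n) ^ n‖ ^ 2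
  have hq0 : q 0 = 1 := by simp [q]
  have hqmax : IsLocalMax q 0 := Eventually.of_forall fun t => by
    rw [hq0]
    simp only [q, norm_pow]
    exact pow_le_one₀ (by positivity) (pow_le_one₀ (norm_nonneg _) (norm_charFun_le_one _))
  obtain ⟨C, hC⟩ :=
    (((contDiff_norm_sq ℝ).comp h).isBigO_sub_sq_of_deriv_eq_zero hqmax.deriv_eq_zero).bound
  refine ⟨C * n ^ 2, ?_⟩
  have hscale : Tendsto (fun t : ℝ => n * t) (𝓝 0) (𝓝 0) :=
    (continuous_const_mul _).tendsto' 0 0 (mul_zero _)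
  filter_upwards [hscale.eventually hC] with t ht
  have hqt : q (n * t) = (‖charFun μ t‖ ^ 2) ^ n := by
    simp [q, hn, norm_pow, ← pow_mul, mul_comm]
  calc 1 - ‖charFun μ t‖ ^ 2 ≤ 1 - (‖charFun μ t‖ ^ 2) ^ n := by
        gcongr
        exact pow_le_of_le_one (by positivity)
          (pow_le_one₀ (norm_nonneg _) (norm_charFun_le_one _)) hn
    _ = -(q (n * t) - q 0) := by rw [hqt, hq0]; ring
    _ ≤ ‖q (n * t) - q 0‖ := neg_le_abs _
    _ ≤ C * ‖(n * t - 0) ^ 2‖ := ht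
    _ = C * n ^ 2 * t ^ 2 := by simp [mul_pow, mul_assoc]

end charFun

theorem sq_integrable_of_charFun_pow_contDiff_general {Ω : Type*} [MeasurableSpace Ω]
    (P : Measure Ω) [IsProbabilityMeasure P] (X : Ω → ℝ) (hX : Measurable X)
    (n : ℕ) (hn : 1 ≤ n)
    (h : ContDiff ℝ 2 (fun t : ℝ =>
        (∫ ω, Complex.exp (Complex.I * ((t / (n : ℝ)) * X ω : ℝ)) ∂P) ^ n)) :
    Integrable (fun ω => (X ω) ^ 2) P := by
  have : IsProbabilityMeasure (P.map X) := Measure.isProbabilityMeasure_map hX.aemeasurable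
  have hcharFun : ContDiff ℝ 2 fun t => charFun (P.map X) (t / n) ^ n := by
    convert h using 3 with t
    rw [charFun_apply_real, integral_map hX.aemeasurable (by fun_prop)]
    simp_rw [mul_comm Complex.I]
    push_cast
    rfl
  obtain ⟨C, hC⟩ := exists_one_sub_norm_charFun_sq_le (by omega) hcharFun
  have hsym : Integrable (fun p : ℝ × ℝ => (p.1 - p.2) ^ 2) ((P.map X).prod (P.map X)) :=
    integrable_sq_of_integral_one_sub_cos_le (by fun_prop) <|
      nhdsWithin_le_nhds <| hC.mono fun t ht => by
        rwa [integral_one_sub_cos_mul_sub_eq_one_sub_norm_charFun_sq]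
  exact (integrable_map_measure (by fun_prop) hX.aemeasurable).1 <|
    integrable_sq_of_integrable_sq_sub_prod (f := id) aestronglyMeasurable_id hsym

/-- if `Ψ(t) = E[e^{itX}]` is the characteristic function of `X`
(with `E[X]` well-defined) and `t ↦ Ψ(t/n)ⁿ` is twice continuously differentiable
on `ℝ` for some `n ≥ 1`, then `E[X²] < ∞`. -/
theorem sq_integrable_of_charFun_pow_contDiff {Ω : Type*} [MeasurableSpace Ω]
    (P : Measure Ω) [IsProbabilityMeasure P] (X : Ω → ℝ) (hX : Measurable X)
    (hX1 : Integrable X P) (n : ℕ) (hn : 1 ≤ n)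
    (h : ContDiff ℝ 2 (fun t : ℝ =>
        (∫ ω, Complex.exp (Complex.I * ((t / (n : ℝ)) * X ω : ℝ)) ∂P) ^ n)) :
    Integrable (fun ω => (X ω) ^ 2) P :=
  sq_integrable_of_charFun_pow_contDiff_general P X hX n hn h
end
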